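/- arXiv:1604.07772 — 4 statements merged into one kernel-verified Lean document; each statement's English description precedes it below -/
import Mathlib

section
/- For every j ∈ {1,…,p} and every n ∈ ℕ, the coefficient of t^{n+1} in the formal power series w^j equals (A^n e_{j−1})(0). (This expresses Theorem 1 i): the resolvent functions g_j(λ) = ((λI − A)^{−1} e_{j−1}, e_0) have, componentwise, the same Laurent expansion at λ = ∞ as the powers z_0(λ)^j of the branch at infinity of the algebraic function a(z) = λ.) -/
/-- The banded Hessenberg Toeplitz operator `A` acting on complex sequences:
`(A f)(i) = f(i+1) + Σ_{k=0}^{min(i,p)} a_k·f(i−k)`. -/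
noncomputable def Aop (p : ℕ) (a : ℕ → ℂ) (f : ℕ → ℂ) : ℕ → ℂ :=
  fun i => f (i + 1) + ∑ k ∈ Finset.range (min i p + 1), a k * f (i - k)

/-- The standard basis sequence `e_l`. -/
noncomputable def eSeq (l : ℕ) : ℕ → ℂ := fun i => if i = l then 1 else 0

/-!
Multiplying `w ^ l` by the defining equation of `w` gives the recursion
`[t^(n+1)] w^(l+1) = [t^n] w^l + Σ_k a_k [t^n] w^(l+k+1)`.
Column `l` of `A` is `e_(l-1) + Σ_k a_k e_(l+k)`, so `(A^n e_l)(0)` satisfies the same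
recursion in `n`, with the same initial values `[t^0] w^l = e_l(0)`.
-/

open PowerSeries Finset

noncomputable def AopLinear (p : ℕ) (a : ℕ → ℂ) : Module.End ℂ (ℕ → ℂ) where
  toFun := Aop p a
  map_add' f g := by
    funext i
    simp only [Aop, Pi.add_apply, mul_add, sum_add_distrib]
    ring
  map_smul' c f := by
    funext i
    simp only [Aop, Pi.smul_apply, smul_eq_mul, RingHom.id_apply, mul_add, mul_sum,
      mul_left_comm]

lemma iterate_Aop_eq_pow (p : ℕ) (a : ℕ → ℂ) (n : ℕ) :
    (Aop p a)^[n] = ⇑(AopLinear p a ^ n) :=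
  (Module.End.coe_pow (AopLinear p a) n).symm

lemma Aop_eSeq (p : ℕ) (a : ℕ → ℂ) (l : ℕ) :
    Aop p a (eSeq l) = (if l = 0 then 0 else eSeq (l - 1))
      + ∑ k ∈ range (p + 1), a k • eSeq (l + k) := by
  funext i
  have hsum : ∑ k ∈ range (min i p + 1), a k * eSeq l (i - k)
      = ∑ k ∈ range (p + 1), a k * eSeq (l + k) i := by
    refine sum_subset_zero_on_sdiff (range_subset_range.2 (by omega)) ?_ ?_
    · intro k hk
      simp only [mem_sdiff, mem_range] at hk
      simp only [eSeq, mul_ite, mul_one, mul_zero, ite_eq_right_iff]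
      omega
    · intro k hk
      simp only [mem_range] at hk
      simp only [eSeq, show i - k = l ↔ i = l + k by omega]
  simp only [Aop, Pi.add_apply, Finset.sum_apply, Pi.smul_apply, smul_eq_mul, hsum]
  rcases l with _ | l <;> simp [eSeq]

section

variable {p : ℕ} {a : ℕ → ℂ} {w : PowerSeries ℂ}
  (hw : w = X * (1 + ∑ k ∈ range (p + 1), C (a k) * w ^ (k + 1)))
include hw

lemma constantCoeff_eq_zero_of_eq_X_mul : constantCoeff w = 0 := by
  rw [hw]
  simp

lemma pow_succ_eq_X_mul (l : ℕ) :
    w ^ (l + 1) = X * (w ^ l + ∑ k ∈ range (p + 1), C (a k) * w ^ (l + k + 1)) := by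
  rw [pow_succ]
  nth_rw 2 [hw]
  rw [mul_left_comm, mul_add, mul_one, mul_sum]
  congr 2
  refine sum_congr rfl fun k _ => ?_
  ring

lemma coeff_succ_pow_succ (n l : ℕ) :
    coeff (n + 1) (w ^ (l + 1))
      = coeff n (w ^ l) + ∑ k ∈ range (p + 1), a k * coeff n (w ^ (l + k + 1)) := by
  rw [pow_succ_eq_X_mul hw, coeff_succ_X_mul, map_add, map_sum]
  simp only [coeff_C_mul]

lemma coeff_succ_pow_succ_eq_iterate_Aop (n l : ℕ) :
    coeff (n + 1) (w ^ (l + 1)) = (Aop p a)^[n] (eSeq l) 0 := by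
  induction n generalizing l with
  | zero =>
    have hw0 := constantCoeff_eq_zero_of_eq_X_mul hw
    rw [coeff_succ_pow_succ hw]
    rcases l with _ | l <;> simp [eSeq, hw0]
  | succ n ih =>
    rw [coeff_succ_pow_succ hw, Function.iterate_succ_apply, Aop_eSeq, iterate_Aop_eq_pow,
      map_add, map_sum]
    simp only [Pi.add_apply, Finset.sum_apply, map_smul, Pi.smul_apply, smul_eq_mul,
      ← iterate_Aop_eq_pow, ih]
    rcases l with _ | l
    · simp [coeff_one, iterate_Aop_eq_pow]
    · simp [ih]

end

theorem statement_0_general (p : ℕ) (a : ℕ → ℂ)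
    (w : PowerSeries ℂ)
    (hw : w = PowerSeries.X * (1 + ∑ k ∈ Finset.range (p + 1),
      PowerSeries.C (a k) * w ^ (k + 1))) :
    ∀ j : ℕ, 1 ≤ j → j ≤ p → ∀ n : ℕ,
      PowerSeries.coeff (n + 1) (w ^ j) = ((Aop p a)^[n] (eSeq (j - 1))) 0 := by
  intro j hj _ n
  obtain ⟨l, rfl⟩ : ∃ l, j = l + 1 := ⟨j - 1, by omega⟩
  exact coeff_succ_pow_succ_eq_iterate_Aop hw n l

/-- for every `j ∈ {1,…,p}` and every `n ∈ ℕ`, the coefficient of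
`t^{n+1}` in `w^j` equals `(A^n e_{j−1})(0)`, where `w` is the unique formal power
series with zero constant coefficient satisfying
`w = t·(1 + a_0·w + a_1·w² + … + a_p·w^{p+1})`. -/
theorem statement_0 (p : ℕ) (hp : 1 ≤ p) (a : ℕ → ℂ) (hap : a p ≠ 0)
    (w : PowerSeries ℂ) (hw0 : PowerSeries.constantCoeff w = 0)
    (hw : w = PowerSeries.X * (1 + ∑ k ∈ Finset.range (p + 1),
      PowerSeries.C (a k) * w ^ (k + 1))) :
    ∀ j : ℕ, 1 ≤ j → j ≤ p → ∀ n : ℕ,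
      PowerSeries.coeff (n + 1) (w ^ j) = ((Aop p a)^[n] (eSeq (j - 1))) 0 :=
  statement_0_general p a w hw
end

section
/- For every n ∈ ℕ and every j ∈ {1,…,p}: L_j(x^k·Q_n(x)) = 0 for all k = 0, 1, …, n_j − 1. (Multiple orthogonality of Q_n with respect to the functionals L_1, …, L_p; Theorem 1 ii).) -/
/-- The sequence `v_j = e_0 + e_1 + … + e_{j−1}`. -/
noncomputable def vSeq (j : ℕ) : ℕ → ℂ := fun i => if i < j then 1 else 0

/-- The linear functional `L_j`, determined by `L_j(x^m) = (A^m v_j)(0)`. -/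
noncomputable def Lfun (p : ℕ) (a : ℕ → ℂ) (j : ℕ) (P : Polynomial ℂ) : ℂ :=
  P.sum fun m c => c * ((Aop p a)^[m] (vSeq j)) 0

/-- The component `n_j = ⌊(n−j)/p⌋ + 1` of the multi-index associated with `n`. -/
def nIdx (p n j : ℕ) : ℤ := Int.fdiv ((n : ℤ) - j) p + 1

open Polynomial

noncomputable def Alin (p : ℕ) (a : ℕ → ℂ) : (ℕ → ℂ) →ₗ[ℂ] (ℕ → ℂ) where
  toFun := Aop p a
  map_add' f g := by
    funext i
    simp only [Aop, Pi.add_apply, mul_add, Finset.sum_add_distrib]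
    ring
  map_smul' c f := by
    funext i
    simp only [Aop, Pi.smul_apply, smul_eq_mul, RingHom.id_apply, Finset.mul_sum,
      mul_add, mul_left_comm]

lemma Alin_coe (p : ℕ) (a : ℕ → ℂ) : ⇑(Alin p a) = Aop p a := rfl

lemma Lfun_eq_aeval (p : ℕ) (a : ℕ → ℂ) (j : ℕ) (P : Polynomial ℂ) :
    Lfun p a j P = (Polynomial.aeval (Alin p a) P) (vSeq j) 0 := by
  rw [Polynomial.aeval_def, Polynomial.eval₂_eq_sum, Lfun, Polynomial.sum_def,
    Polynomial.sum_def]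
  rw [LinearMap.sum_apply]
  rw [Finset.sum_apply]
  apply Finset.sum_congr rfl
  intro m _
  rw [Module.End.mul_apply, Module.algebraMap_end_apply, Pi.smul_apply, smul_eq_mul,
    Module.End.pow_apply, Alin_coe]

lemma evalQ (p : ℕ) (a : ℕ → ℂ) (Q : ℕ → Polynomial ℂ) (hQ0 : Q 0 = 1)
    (hQrec : ∀ n : ℕ, X * Q n =
      Q (n + 1) + ∑ k ∈ Finset.range (min n p + 1), C (a k) * Q (n - k)) :
    ∀ l : ℕ, ∀ f : ℕ → ℂ, (aeval (Alin p a) (Q l)) f 0 = f l := by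
  intro l
  induction l using Nat.strong_induction_on with
  | _ l ih =>
    match l with
    | 0 => intro f; simp [hQ0]
    | (l+1) =>
      intro f
      have h1 : Q (l+1) = Q l * X - ∑ k ∈ Finset.range (min l p + 1), C (a k) * Q (l-k) := by
        rw [eq_sub_iff_add_eq, ← hQrec l]; ring
      rw [h1, map_sub, map_mul, LinearMap.sub_apply, Module.End.mul_apply, Pi.sub_apply,
        aeval_X, ih l (by omega) (Alin p a f), Alin_coe, map_sum, LinearMap.sum_apply,
        Finset.sum_apply]
      have hs : ∀ k ∈ Finset.range (min l p + 1),
          ((aeval (Alin p a)) (C (a k) * Q (l - k))) f 0 = a k * f (l - k) := by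
        intro k hk
        rw [map_mul, aeval_C, Module.End.mul_apply, Module.algebraMap_end_apply,
          Pi.smul_apply, smul_eq_mul, ih (l - k) (by omega) f]
      rw [Finset.sum_congr rfl hs]
      simp only [Aop]
      ring

lemma spanQ (p : ℕ) (a : ℕ → ℂ) (Q : ℕ → Polynomial ℂ)
    (hQrec : ∀ n : ℕ, X * Q n =
      Q (n + 1) + ∑ k ∈ Finset.range (min n p + 1), C (a k) * Q (n - k)) :
    ∀ k n : ℕ, X ^ k * Q n ∈ Submodule.span ℂ (Q '' Set.Icc (n - p * k) (n + k)) := by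
  intro k
  induction k with
  | zero =>
    intro n
    have hmem : Q n ∈ Q '' Set.Icc (n - p * 0) (n + 0) := ⟨n, by simp, rfl⟩
    simpa using Submodule.subset_span hmem
  | succ k ih =>
    intro n
    have hpe : p * (k + 1) = p * k + p := by ring
    have hstep : ∀ q ∈ Submodule.span ℂ (Q '' Set.Icc (n - p * k) (n + k)),
        X * q ∈ Submodule.span ℂ (Q '' Set.Icc (n - p * (k+1)) (n + (k+1))) := by
      intro q hq
      induction hq using Submodule.span_induction with
      | mem x hx =>
        obtain ⟨m, hm, rfl⟩ := hx
        rw [Set.mem_Icc] at hm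
        obtain ⟨hm1, hm2⟩ := hm
        rw [hQrec m]
        apply Submodule.add_mem
        · apply Submodule.subset_span
          refine ⟨m + 1, ?_, rfl⟩
          rw [Set.mem_Icc]
          omega
        · apply Submodule.sum_mem
          intro l hl
          have hl2 := Finset.mem_range.mp hl
          have hlp : l ≤ p := by omega
          rw [← Polynomial.smul_eq_C_mul]
          apply Submodule.smul_mem
          apply Submodule.subset_span
          refine ⟨m - l, ?_, rfl⟩
          rw [Set.mem_Icc]
          omega
      | zero => simp
      | add x y hx hy ihx ihy =>
        have h := Submodule.add_mem _ ihx ihy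
        rwa [← mul_add] at h
      | smul c x hx ihx =>
        have h := Submodule.smul_mem _ c ihx
        rwa [← mul_smul_comm] at h
    have h2 : X ^ (k+1) * Q n = X * (X ^ k * Q n) := by ring
    rw [h2]
    exact hstep _ (ih n)

/-- multiple orthogonality `L_j(x^k·Q_n(x)) = 0` for `k = 0,…,n_j − 1`. -/
theorem statement_1 (p : ℕ) (hp : 1 ≤ p) (a : ℕ → ℂ) (hap : a p ≠ 0)
    (Q : ℕ → Polynomial ℂ) (hQ0 : Q 0 = 1)
    (hQrec : ∀ n : ℕ, Polynomial.X * Q n =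
      Q (n + 1) + ∑ k ∈ Finset.range (min n p + 1), Polynomial.C (a k) * Q (n - k)) :
    ∀ n : ℕ, ∀ j : ℕ, 1 ≤ j → j ≤ p → ∀ k : ℕ, (k : ℤ) < nIdx p n j →
      Lfun p a j (Polynomial.X ^ k * Q n) = 0 := by
  intro n j hj1 hjp k hk
  have hp0 : (0:ℤ) < p := by exact_mod_cast hp
  have hk' : (k:ℤ) ≤ Int.fdiv ((n:ℤ) - j) p := by
    unfold nIdx at hk
    exact Int.lt_add_one_iff.mp hk
  rw [Int.fdiv_eq_ediv_of_nonneg _ (le_of_lt hp0)] at hk'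
  have hmul : (k:ℤ) * p ≤ (n:ℤ) - j := (Int.le_ediv_iff_mul_le hp0).mp hk'
  have hZ : (p:ℤ) * k + j ≤ n := by rw [mul_comm]; linarith
  have hpk : p * k + j ≤ n := by exact_mod_cast hZ
  set φ : Polynomial ℂ →ₗ[ℂ] ℂ :=
    (LinearMap.proj 0).comp ((LinearMap.applyₗ (vSeq j)).comp
      (Polynomial.aeval (Alin p a)).toLinearMap) with hφdef
  have hφ : ∀ P : Polynomial ℂ, φ P = Lfun p a j P := by
    intro P
    rw [Lfun_eq_aeval]
    rfl
  have hsub : Submodule.span ℂ (Q '' Set.Icc (n - p * k) (n + k)) ≤ LinearMap.ker φ := by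
    rw [Submodule.span_le]
    rintro P ⟨m, hm, rfl⟩
    rw [Set.mem_Icc] at hm
    simp only [SetLike.mem_coe, LinearMap.mem_ker]
    rw [hφ, Lfun_eq_aeval, evalQ p a Q hQ0 hQrec m (vSeq j)]
    have hmj : ¬ m < j := by omega
    simp [vSeq, hmj]
  have hmem := hsub (spanQ p a Q hQrec k n)
  rw [LinearMap.mem_ker, hφ] at hmem
  exact hmem
end

section
/- For each j ∈ {1,…,p} and each n ≥ j, the formal power series Q̃_n(t)·w(t)^j − t^j·Q̃_{n−j}(t) has order at least n + n_j + 1 (its coefficient of t^m vanishes for every m ≤ n + n_j), where Q̃_m(t) := t^m·Q_m(1/t) ∈ ℂ[t] denotes the reversed polynomial of Q_m. (This is the type II Hermite–Padé property Q_n(λ)·z_0(λ)^j − Q_{n−j}(λ) = O(λ^{−n_j−1}) as λ → ∞ of Theorem 1 iii).) -/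
/-!
Write `Q̃_m` for the reversed polynomials and `E(n, j) = Q̃_n w^j − t^j Q̃_{n−j}`.
Reversing the recurrence gives `Q̃_{m} = Q̃_{m+1} + ∑ₖ aₖ t^{k+1} Q̃_{m−k}`, and combined with
`w = t (1 + ∑ₖ aₖ w^{k+1})` this yields
`E(n, j+1) = w · E(n, j) + ∑ₖ aₖ t^{j+1} E(n−j, k+1)`.
Every term on the right carries a factor `t` (from `w`, or from `t^{j+1}`), so a strong induction
on the exponent `N` in `t^N ∣ E(n, j)` propagates the order bound through all `j ≤ p + 1`.
-/

open Polynomial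
open scoped PowerSeries

namespace Polynomial

variable {R : Type*} [Semiring R]

theorem reflect_sum {ι : Type*} (s : Finset ι) (f : ι → R[X]) (N : ℕ) :
    reflect N (∑ i ∈ s, f i) = ∑ i ∈ s, reflect N (f i) :=
  map_sum ({ toFun := reflect N
             map_zero' := reflect_zero
             map_add' := fun f g => reflect_add f g N } : R[X] →+ R[X]) f s

theorem reflect_add_of_natDegree_le {f : R[X]} {N : ℕ} (hf : f.natDegree ≤ N) (k : ℕ) :
    reflect (N + k) f = X ^ k * reflect N f := by
  have h := reflect_mul (1 : R[X]) f (F := k) (by simp) hf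
  rwa [one_mul, reflect_one, add_comm] at h

theorem reflect_succ_X_mul {f : R[X]} {N : ℕ} (hf : f.natDegree ≤ N) :
    reflect (N + 1) (X * f) = reflect N f := by
  have h := reflect_mul (X : R[X]) f (F := 1) natDegree_X_le hf
  rwa [reflect_one_X, one_mul, add_comm] at h

end Polynomial

namespace HermitePade

variable {R : Type*} [CommRing R] {p : ℕ} {a : ℕ → R} {Q : ℕ → R[X]}

/-- The truncation `min n p` of the sum encodes `Q_{-1} = ⋯ = Q_{-p} = 0`. -/
def IsRecurrence (p : ℕ) (a : ℕ → R) (Q : ℕ → R[X]) : Prop :=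
  ∀ n : ℕ, X * Q n = Q (n + 1) + ∑ k ∈ Finset.range (min n p + 1), C (a k) * Q (n - k)

theorem IsRecurrence.degree_eq [Nontrivial R] (hQ : IsRecurrence p a Q) (hQ0 : Q 0 = 1)
    (n : ℕ) : (Q n).degree = n := by
  induction n using Nat.strong_induction_on with
  | _ n ih =>
  cases n with
  | zero => simp [hQ0]
  | succ n =>
    have hXQ : (X * Q n).degree = ↑(n + 1) := by
      rw [mul_comm, degree_mul_X, ih n n.lt_succ_self]; rfl
    have hsum : (∑ k ∈ Finset.range (min n p + 1), C (a k) * Q (n - k)).degree < ↑(n + 1) := by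
      refine (degree_le_of_natDegree_le (natDegree_sum_le_of_forall_le _ _ fun k _ => ?_)).trans_lt
        (by exact_mod_cast n.lt_succ_self)
      refine (natDegree_C_mul_le _ _).trans ?_
      rw [natDegree_eq_of_degree_eq_some (ih (n - k) (by omega))]
      exact n.sub_le k
    rw [eq_sub_of_add_eq (hQ n).symm, degree_sub_eq_left_of_degree_lt (hXQ ▸ hsum), hXQ]

theorem IsRecurrence.reverse_eq (hQ : IsRecurrence p a Q) (hdeg : ∀ n, (Q n).natDegree = n)
    (n : ℕ) : (Q n).reverse = (Q (n + 1)).reverse +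
      ∑ k ∈ Finset.range (min n p + 1), C (a k) * X ^ (k + 1) * (Q (n - k)).reverse := by
  have h := congrArg (reflect (n + 1)) (hQ n)
  rw [reflect_succ_X_mul (hdeg n).le, reflect_add, reflect_sum] at h
  simp only [reverse, hdeg] at h ⊢
  rw [h]
  refine congrArg _ (Finset.sum_congr rfl fun k hk => ?_)
  have hkn : k ≤ n := by have := Finset.mem_range.mp hk; omega
  rw [reflect_C_mul, show n + 1 = n - k + (k + 1) by omega,
    reflect_add_of_natDegree_le (hdeg _).le, mul_assoc]

/-- `Q̃_{n-k}` as a power series, with `Q̃_i = 0` for `i < 0` (truncated subtraction would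
otherwise give `Q̃_0`). -/
noncomputable def shiftedReverse (Q : ℕ → R[X]) (n k : ℕ) : R⟦X⟧ :=
  if k ≤ n then ((Q (n - k)).reverse : R⟦X⟧) else 0

theorem shiftedReverse_of_le (Q : ℕ → R[X]) {n k : ℕ} (h : k ≤ n) :
    shiftedReverse Q n k = ((Q (n - k)).reverse : R⟦X⟧) :=
  if_pos h

@[simp]
theorem shiftedReverse_succ_succ (Q : ℕ → R[X]) (n k : ℕ) :
    shiftedReverse Q (n + 1) (k + 1) = shiftedReverse Q n k := by
  simp [shiftedReverse]

theorem IsRecurrence.coe_reverse_eq (hQ : IsRecurrence p a Q) (hdeg : ∀ n, (Q n).natDegree = n)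
    (n : ℕ) : ((Q n).reverse : R⟦X⟧) = ((Q (n + 1)).reverse : R⟦X⟧) +
      ∑ k ∈ Finset.range (p + 1), PowerSeries.C (a k) * PowerSeries.X ^ (k + 1) *
        shiftedReverse Q n k := by
  have h := congrArg (Polynomial.coeToPowerSeries.ringHom (R := R)) (hQ.reverse_eq hdeg n)
  simp only [map_add, map_sum, map_mul, map_pow, coeToPowerSeries.ringHom_apply, Polynomial.coe_C,
    Polynomial.coe_X] at h
  rw [h, ← Finset.sum_subset (Finset.range_subset_range.mpr (by omega : min n p + 1 ≤ p + 1))]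
  · refine congrArg _ (Finset.sum_congr rfl fun k hk => ?_)
    have hkn : k ≤ n := by have := Finset.mem_range.mp hk; omega
    rw [shiftedReverse_of_le Q hkn]
  · intro k hk hkn
    simp only [Finset.mem_range] at hk hkn
    simp [shiftedReverse, show ¬k ≤ n by omega]

noncomputable def remainder (Q : ℕ → R[X]) (w : R⟦X⟧) (n j : ℕ) : R⟦X⟧ :=
  ((Q n).reverse : R⟦X⟧) * w ^ j - PowerSeries.X ^ j * shiftedReverse Q n j

theorem remainder_zero_right (Q : ℕ → R[X]) (w : R⟦X⟧) (n : ℕ) : remainder Q w n 0 = 0 := by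
  simp [remainder, shiftedReverse_of_le]

theorem remainder_of_lt (Q : ℕ → R[X]) (w : R⟦X⟧) {n j : ℕ} (h : n < j) :
    remainder Q w n j = ((Q n).reverse : R⟦X⟧) * w ^ j := by
  simp [remainder, shiftedReverse, show ¬j ≤ n by omega]

theorem IsRecurrence.remainder_add_succ (hQ : IsRecurrence p a Q)
    (hdeg : ∀ n, (Q n).natDegree = n) {w : R⟦X⟧}
    (hw : w = PowerSeries.X * (1 + ∑ k ∈ Finset.range (p + 1),
      PowerSeries.C (a k) * w ^ (k + 1))) (m j : ℕ) :
    remainder Q w (m + j + 1) (j + 1) = w * remainder Q w (m + j + 1) j +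
      ∑ k ∈ Finset.range (p + 1),
        PowerSeries.C (a k) * (PowerSeries.X ^ (j + 1) * remainder Q w (m + 1) (k + 1)) := by
  set S := ∑ k ∈ Finset.range (p + 1), PowerSeries.C (a k) * w ^ (k + 1)
  have hwX : w * PowerSeries.X ^ j = PowerSeries.X ^ (j + 1) * (1 + S) := by
    conv_lhs => rw [hw]
    ring
  have hsum : ∑ k ∈ Finset.range (p + 1),
        PowerSeries.C (a k) * (PowerSeries.X ^ (j + 1) * remainder Q w (m + 1) (k + 1)) =
      PowerSeries.X ^ (j + 1) * (((Q (m + 1)).reverse : R⟦X⟧) * S -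
        ∑ k ∈ Finset.range (p + 1),
          PowerSeries.C (a k) * PowerSeries.X ^ (k + 1) * shiftedReverse Q m k) := by
    rw [Finset.mul_sum, mul_sub, Finset.mul_sum, Finset.mul_sum, ← Finset.sum_sub_distrib]
    refine Finset.sum_congr rfl fun k _ => ?_
    simp only [remainder, shiftedReverse_succ_succ]
    ring
  rw [hsum]
  simp only [remainder, shiftedReverse_of_le Q (by omega : j ≤ m + j + 1),
    shiftedReverse_of_le Q (by omega : j + 1 ≤ m + j + 1), show m + j + 1 - j = m + 1 by omega,
    show m + j + 1 - (j + 1) = m by omega]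
  linear_combination ((Q (m + 1)).reverse : R⟦X⟧) * hwX -
    PowerSeries.X ^ (j + 1) * hQ.coe_reverse_eq hdeg m

/-- For `j ≤ n` this is `n + n_j + 1`; for `j > n` the bound comes from `t^j ∣ w^j` alone. -/
def remainderOrder (p n j : ℕ) : ℕ := if j ≤ n then n + (n - j) / p + 2 else n + 1

theorem remainderOrder_add_succ_le (p m j : ℕ) :
    remainderOrder p (m + j + 1) (j + 1) ≤ remainderOrder p (m + j + 1) j + 1 := by
  have : m / p ≤ (m + 1) / p := Nat.div_le_div_right m.le_succ
  simp only [remainderOrder, if_pos (by omega : j + 1 ≤ m + j + 1),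
    if_pos (by omega : j ≤ m + j + 1), show m + j + 1 - (j + 1) = m by omega, show m + j + 1 - j = m + 1 by omega]
  omega

theorem div_le_sub_div_add_one {p k : ℕ} (hp : 0 < p) (hk : k ≤ p) (x : ℕ) :
    x / p ≤ (x - k) / p + 1 :=
  calc x / p ≤ (x - k + p) / p := Nat.div_le_div_right (by omega)
    _ = (x - k) / p + 1 := Nat.add_div_right _ hp

theorem remainderOrder_add_succ_le_add {p k : ℕ} (hp : 0 < p) (hk : k ≤ p) (m j : ℕ) :
    remainderOrder p (m + j + 1) (j + 1) ≤ j + 1 + remainderOrder p (m + 1) (k + 1) := by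
  rw [remainderOrder, if_pos (by omega), show m + j + 1 - (j + 1) = m by omega, remainderOrder]
  split_ifs with hkm
  · have := div_le_sub_div_add_one hp hk m
    rw [show m + 1 - (k + 1) = m - k by omega]
    omega
  · rw [Nat.div_eq_of_lt (by omega : m < p)]
    omega

theorem IsRecurrence.X_pow_dvd_remainder (hQ : IsRecurrence p a Q)
    (hdeg : ∀ n, (Q n).natDegree = n) (hp : 0 < p) {w : R⟦X⟧}
    (hw0 : PowerSeries.constantCoeff w = 0)
    (hw : w = PowerSeries.X * (1 + ∑ k ∈ Finset.range (p + 1),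
      PowerSeries.C (a k) * w ^ (k + 1))) (N : ℕ) :
    ∀ n j, j ≤ p + 1 → N ≤ remainderOrder p n j → PowerSeries.X ^ N ∣ remainder Q w n j := by
  have hXw : PowerSeries.X ∣ w := PowerSeries.X_dvd_iff.mpr hw0
  induction N using Nat.strong_induction_on with
  | _ N ih =>
  intro n j hjp hN
  rcases Nat.eq_zero_or_pos N with rfl | hN0
  · exact one_dvd _
  rcases lt_or_ge n j with hnj | hjn
  · have hNj : N ≤ j := by simp only [remainderOrder, if_neg (by omega : ¬j ≤ n)] at hN; omega
    rw [remainder_of_lt Q w hnj]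
    exact ((pow_dvd_pow _ hNj).trans (pow_dvd_pow_of_dvd hXw j)).mul_left _
  rcases Nat.eq_zero_or_pos j with rfl | hj0
  · rw [remainder_zero_right]
    exact dvd_zero _
  obtain ⟨m, i, rfl, rfl⟩ : ∃ m i, n = m + i + 1 ∧ j = i + 1 :=
    ⟨n - j, j - 1, by omega, by omega⟩
  rw [hQ.remainder_add_succ hdeg hw]
  refine dvd_add ?_ (Finset.dvd_sum fun k hk => (Dvd.dvd.mul_left ?_ _))
  · rw [show N = 1 + (N - 1) by omega, pow_add, pow_one]
    refine mul_dvd_mul hXw (ih _ (by omega) _ _ (by omega) ?_)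
    have := remainderOrder_add_succ_le p m i
    omega
  · have hkp : k ≤ p := Nat.lt_succ_iff.mp (Finset.mem_range.mp hk)
    have := remainderOrder_add_succ_le_add hp hkp m i
    refine (pow_dvd_pow _ (by omega : N ≤ (i + 1) + (N - (i + 1)))).trans ?_
    rw [pow_add]
    exact mul_dvd_mul_left _ (ih _ (by omega) _ _ (by omega) (by omega))

end HermitePade

open HermitePade

theorem statement_2_general (p : ℕ) (hp : 1 ≤ p) (a : ℕ → ℂ)
    (Q : ℕ → Polynomial ℂ) (hQ0 : Q 0 = 1)
    (hQrec : ∀ n : ℕ, Polynomial.X * Q n =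
      Q (n + 1) + ∑ k ∈ Finset.range (min n p + 1), Polynomial.C (a k) * Q (n - k))
    (w : PowerSeries ℂ) (hw0 : PowerSeries.constantCoeff w = 0)
    (hw : w = PowerSeries.X * (1 + ∑ k ∈ Finset.range (p + 1),
      PowerSeries.C (a k) * w ^ (k + 1))) :
    ∀ j : ℕ, 1 ≤ j → j ≤ p → ∀ n : ℕ, j ≤ n →
      ∀ m : ℕ, m ≤ n + ((n - j) / p + 1) →
        PowerSeries.coeff m
          (((Q n).reverse : PowerSeries ℂ) * w ^ j
            - PowerSeries.X ^ j * ((Q (n - j)).reverse : PowerSeries ℂ)) = 0 := by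
  intro j _ hjp n hjn m hm
  have hQ : IsRecurrence p a Q := hQrec
  have hdeg n : (Q n).natDegree = n := natDegree_eq_of_degree_eq_some (hQ.degree_eq hQ0 n)
  have hdvd := hQ.X_pow_dvd_remainder hdeg hp hw0 hw _ n j (by omega) le_rfl
  have hrem : remainder Q w n j = ((Q n).reverse : PowerSeries ℂ) * w ^ j
      - PowerSeries.X ^ j * ((Q (n - j)).reverse : PowerSeries ℂ) := by
    rw [remainder, shiftedReverse_of_le Q hjn]
  rw [← hrem]
  refine PowerSeries.X_pow_dvd_iff.mp hdvd m ?_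
  simp only [remainderOrder, if_pos hjn]
  omega

/-- the type II Hermite–Padé property. For `j ∈ {1,…,p}` and `n ≥ j`,
the formal power series `Q̃_n(t)·w(t)^j − t^j·Q̃_{n−j}(t)` has order at least
`n + n_j + 1`, where `Q̃_m` is the reversed polynomial `t^m·Q_m(1/t)` and
`n_j = ⌊(n−j)/p⌋ + 1`. -/
theorem statement_2 (p : ℕ) (hp : 1 ≤ p) (a : ℕ → ℂ) (hap : a p ≠ 0)
    (Q : ℕ → Polynomial ℂ) (hQ0 : Q 0 = 1)
    (hQrec : ∀ n : ℕ, Polynomial.X * Q n =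
      Q (n + 1) + ∑ k ∈ Finset.range (min n p + 1), Polynomial.C (a k) * Q (n - k))
    (w : PowerSeries ℂ) (hw0 : PowerSeries.constantCoeff w = 0)
    (hw : w = PowerSeries.X * (1 + ∑ k ∈ Finset.range (p + 1),
      PowerSeries.C (a k) * w ^ (k + 1))) :
    ∀ j : ℕ, 1 ≤ j → j ≤ p → ∀ n : ℕ, j ≤ n →
      ∀ m : ℕ, m ≤ n + ((n - j) / p + 1) →
        PowerSeries.coeff m
          (((Q n).reverse : PowerSeries ℂ) * w ^ j
            - PowerSeries.X ^ j * ((Q (n - j)).reverse : PowerSeries ℂ)) = 0 :=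
  statement_2_general p hp a Q hQ0 hQrec w hw0 hw
end

section
/- Let p ≥ 1, and let λ, a_0, …, a_p, h_1, …, h_p ∈ ℂ with a_p ≠ 0 and h_p + λ − a_0 ≠ 0. Assume h_1 = −a_p/(h_p + λ − a_0) and h_k = (h_{k−1} − a_{p−k+1})/(h_p + λ − a_0) for k = 2, …, p. Set w := −h_1/a_p. Then: (i) for every k = 1, …, p, h_k = −( a_p·w^k + a_{p−1}·w^{k−1} + … + a_{p−k+1}·w ); and (ii) a_p·w^{p+1} + a_{p−1}·w^p + … + a_1·w² + (a_0 − λ)·w + 1 = 0, i.e., −h_1/a_p is a solution of the algebraic equation a(z) = λ, where a(z) = z^{−1} + a_0 + a_1 z + … + a_p z^p. -/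
/-!
Since `h_1 = -a_p/(h_p + λ - a_0)`, the number `w = -h_1/a_p` is `(h_p + λ - a_0)⁻¹`, so the
defining recursion reads `h_{k+1} = (h_k - a_{p-k})·w`: a Horner scheme whose unrolling gives
`h_k = -(a_p w^k + … + a_{p-k+1} w)`. For `k = p` this says `h_p·w = -(a_1 w² + … + a_p w^{p+1})`,
and `w·(h_p + λ - a_0) = 1` turns that into the algebraic equation for `w`.
-/

open Finset

theorem Finset.sum_Icc_one_add_one {M : Type*} [AddCommMonoid M] (f : ℕ → M) (k : ℕ) :
    ∑ i ∈ Icc 1 (k + 1), f i = f 1 + ∑ i ∈ Icc 1 k, f (i + 1) := by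
  rw [← insert_Icc_add_one_left_eq_Icc (by omega), sum_insert (by simp), ← map_add_right_Icc,
    sum_map]
  rfl

theorem sum_Icc_one_mul_pow_add_one {R : Type*} [CommSemiring R] (f : ℕ → R) (w : R) (k : ℕ) :
    ∑ i ∈ Icc 1 (k + 1), f i * w ^ i = (f 1 + ∑ i ∈ Icc 1 k, f (i + 1) * w ^ i) * w := by
  simp only [sum_Icc_one_add_one, add_mul, sum_mul, pow_succ, pow_zero, one_mul, mul_assoc]

theorem eq_neg_sum_of_recurrence {R : Type*} [CommRing R] {p : ℕ} {a h : ℕ → R} {w : R}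
    (h_one : h 1 = -(a p * w))
    (h_succ : ∀ k, 1 ≤ k → k < p → h (k + 1) = (h k - a (p - k)) * w) :
    ∀ k, 1 ≤ k → k ≤ p → h k = -∑ i ∈ Icc 1 k, a (p - k + i) * w ^ i := by
  intro k hk
  induction k, hk using Nat.le_induction with
  | base => intro hp; simpa [Nat.sub_add_cancel hp] using h_one
  | succ k hk ih =>
    intro hkp
    -- at `i = 0` this also rewrites the leading coefficient `a (p - (k + 1) + 1)`
    have hshift : ∀ i, p - (k + 1) + (i + 1) = p - k + i := fun i => by omega
    rw [h_succ k hk hkp, ih (Nat.le_of_succ_le hkp), sum_Icc_one_mul_pow_add_one]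
    simp only [hshift, add_zero]
    ring

/-- identities satisfied by the tail `(h_1, …, h_p)` of the vector
continued fraction of the generalized Jacobi–Perron algorithm: with
`w = −h_1/a_p`, each `h_k = −(a_p·w^k + … + a_{p−k+1}·w)` and `w` solves
`a_p·w^{p+1} + … + a_1·w² + (a_0 − λ)·w + 1 = 0`. -/
theorem statement_17 (p : ℕ) (hp : 1 ≤ p) (lam : ℂ) (a h : ℕ → ℂ)
    (hap : a p ≠ 0) (hden : h p + lam - a 0 ≠ 0)
    (h1 : h 1 = -a p / (h p + lam - a 0))
    (hk : ∀ k : ℕ, 2 ≤ k → k ≤ p →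
      h k = (h (k - 1) - a (p - k + 1)) / (h p + lam - a 0)) :
    (∀ k : ℕ, 1 ≤ k → k ≤ p →
      h k = -(∑ i ∈ Finset.Icc 1 k, a (p - k + i) * (-h 1 / a p) ^ i)) ∧
    (∑ k ∈ Finset.Icc 1 p, a k * (-h 1 / a p) ^ (k + 1) +
      (a 0 - lam) * (-h 1 / a p) + 1 = 0) := by
  set w := -h 1 / a p with hw_def
  have hw : w = (h p + lam - a 0)⁻¹ := by
    rw [hw_def, h1]
    field_simp
  have h_one : h 1 = -(a p * w) := by rw [h1, hw, div_eq_mul_inv, neg_mul]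
  have h_succ : ∀ k, 1 ≤ k → k < p → h (k + 1) = (h k - a (p - k)) * w := by
    intro k hk1 hkp
    rw [hk (k + 1) (by omega) hkp, Nat.add_sub_cancel, show p - (k + 1) + 1 = p - k by omega,
      hw, div_eq_mul_inv]
  have closed := eq_neg_sum_of_recurrence h_one h_succ
  refine ⟨closed, ?_⟩
  have h_p : h p = -∑ i ∈ Icc 1 p, a i * w ^ i := by simpa using closed p hp le_rfl
  have hw_mul : w * (h p + lam - a 0) = 1 := by rw [hw]; exact inv_mul_cancel₀ hden
  have h_shift : ∑ k ∈ Icc 1 p, a k * w ^ (k + 1) = (∑ k ∈ Icc 1 p, a k * w ^ k) * w := by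
    simp only [sum_mul, pow_succ, mul_assoc]
  rw [h_shift]
  linear_combination -hw_mul + w * h_p
end
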